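/- Let p be a prime with gcd(3,p) = 1 and p^m ≡ 1 (mod 3), and let δ ∈ R^t be a unit that is a cube in R^t, say δ = δ̃³ with δ̃ ∈ R^t. Then δ̃ is a unit of R^t, and there exist distinct elements b, c ∈ F \ {0, 1} such that x^{3p^s} − δ = (x^{p^s} − δ̃)(x^{p^s} − bδ̃)(x^{p^s} − cδ̃) in R^t[x] and there is a ring isomorphism R^{t,3}_δ = R^t[x]/⟨x^{3p^s} − δ⟩ ≅ R^t[x]/⟨x^{p^s} − δ̃⟩ × R^t[x]/⟨x^{p^s} − bδ̃⟩ × R^t[x]/⟨x^{p^s} − cδ̃⟩. -/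

import Mathlib

open Polynomial

/-- The finite chain ring `R^t = 𝔽_{p^m}[u]/⟨u^t⟩`. -/
abbrev Rt (p m t : ℕ) [Fact p.Prime] : Type _ :=
  Polynomial (GaloisField p m) ⧸ Ideal.span {(X : Polynomial (GaloisField p m)) ^ t}

/-- The canonical projection `𝔽_{p^m}[u] → R^t`. -/
noncomputable def mkRt (p m t : ℕ) [Fact p.Prime] :
    Polynomial (GaloisField p m) →+* Rt p m t :=
  Ideal.Quotient.mk _

/-- The element `u ∈ R^t`. -/
noncomputable def uRt (p m t : ℕ) [Fact p.Prime] : Rt p m t := mkRt p m t X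

/-- The canonical embedding `𝔽_{p^m} → R^t`. -/
noncomputable def κ (p m t : ℕ) [Fact p.Prime] : GaloisField p m →+* Rt p m t :=
  (mkRt p m t).comp (C : GaloisField p m →+* Polynomial (GaloisField p m))

instance Qr.isTwoSided (p m t : ℕ) [Fact p.Prime] (N : ℕ) (δ : Rt p m t) :
    (Ideal.span {(X : Polynomial (Rt p m t)) ^ N - C δ}).IsTwoSided :=
  Ideal.IsTwoSided.mk (fun b ha => mul_comm b _ ▸ Ideal.mul_mem_left _ _ ha)

/-- The quotient ring `R^t[x]/⟨x^N − δ⟩`. -/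
abbrev Qr (p m t : ℕ) [Fact p.Prime] (N : ℕ) (δ : Rt p m t) : Type _ :=
  Polynomial (Rt p m t) ⧸ Ideal.span {(X : Polynomial (Rt p m t)) ^ N - C δ}

/-- The canonical projection `R^t[x] → R^t[x]/⟨x^N − δ⟩`. -/
noncomputable def mkQr (p m t : ℕ) [Fact p.Prime] (N : ℕ) (δ : Rt p m t) :
    Polynomial (Rt p m t) →+* Qr p m t N δ :=
  Ideal.Quotient.mk _

/-! Since `3 ∣ p ^ m - 1 = |𝔽ˣ|`, the field `𝔽` contains a primitive cube root of unity `ω`, and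
`1 + ω + ω² = 0` gives `Y³ - a³ = (Y - a)(Y - ωa)(Y - ω²a)`; take `Y = x ^ p ^ s`, `a = δ̃`,
`b = ω`, `c = ω²`. Two of the factors differ by the constant `(ωⁱ - ωʲ)δ̃`, a unit of `R^t`, so
they are pairwise coprime and the Chinese remainder theorem gives the isomorphism. -/

theorem exists_isPrimitiveRoot_of_prime_dvd_card_sub_one (K : Type*) [Field K] [Finite K]
    (q : ℕ) [Fact q.Prime] (hq : q ∣ Nat.card K - 1) : ∃ ω : K, IsPrimitiveRoot ω q := by
  obtain ⟨g, hg⟩ := exists_prime_orderOf_dvd_card' (G := Kˣ) q (by rwa [Nat.card_units])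
  exact ⟨g, IsPrimitiveRoot.coe_units_iff.mpr (hg ▸ IsPrimitiveRoot.orderOf g)⟩

theorem pow_three_sub_pow_three_of_one_add_add_sq_eq_zero {A : Type*} [CommRing A] {ω : A}
    (hω : 1 + ω + ω ^ 2 = 0) (y a : A) :
    y ^ 3 - a ^ 3 = (y - a) * (y - ω * a) * (y - ω ^ 2 * a) := by
  linear_combination (y - a) * (a * y + (1 - ω) * a ^ 2) * hω

theorem X_pow_three_mul_sub_C_pow_three {A : Type*} [CommRing A] {ω : A}
    (hω : 1 + ω + ω ^ 2 = 0) (n : ℕ) (a : A) :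
    (X : A[X]) ^ (3 * n) - C (a ^ 3) =
      (X ^ n - C a) * (X ^ n - C (ω * a)) * (X ^ n - C (ω ^ 2 * a)) := by
  have hCω : 1 + C ω + C ω ^ 2 = 0 := by rw [← C_pow, ← C_1, ← C_add, ← C_add, hω, C_0]
  rw [mul_comm 3 n, pow_mul, C_pow, C_mul, C_mul, C_pow,
    pow_three_sub_pow_three_of_one_add_add_sq_eq_zero hCω]

theorem isCoprime_X_pow_sub_C_of_isUnit_sub {A : Type*} [CommRing A] (n : ℕ) {a b : A}
    (h : IsUnit (a - b)) : IsCoprime ((X : A[X]) ^ n - C a) (X ^ n - C b) := by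
  refine ⟨-C ↑h.unit⁻¹, C ↑h.unit⁻¹, ?_⟩
  calc -C ↑h.unit⁻¹ * (X ^ n - C a) + C ↑h.unit⁻¹ * (X ^ n - C b)
      = C (↑h.unit⁻¹ * (a - b)) := by rw [C_mul, C_sub]; ring
    _ = 1 := by rw [h.val_inv_mul, C_1]

theorem isUnit_map_mul_sub_map_mul {K A : Type*} [Field K] [CommRing A] (f : K →+* A)
    {x y : K} (hxy : x ≠ y) {d : A} (hd : IsUnit d) : IsUnit (f x * d - f y * d) := by
  rw [← sub_mul, ← map_sub]
  exact ((sub_ne_zero.2 hxy).isUnit.map f).mul hd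

open Ideal in
noncomputable def Ideal.quotientSpanMulMulEquivProd {R : Type*} [CommRing R] {f g h : R}
    (hfg : IsCoprime f g) (hfh : IsCoprime f h) (hgh : IsCoprime g h) :
    R ⧸ span {f * g * h} ≃+* (R ⧸ span {f}) × (R ⧸ span {g}) × (R ⧸ span {h}) :=
  (quotEquivOfEq (by rw [mul_assoc, ← span_singleton_mul_span_singleton])).trans <|
    (quotientMulEquivQuotientProd _ _
      ((isCoprime_span_singleton_iff _ _).2 (hfg.mul_right hfh))).trans <|
    (RingEquiv.refl _).prodCongr <|
      (quotEquivOfEq (span_singleton_mul_span_singleton g h).symm).trans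
        (quotientMulEquivQuotientProd _ _ ((isCoprime_span_singleton_iff _ _).2 hgh))

theorem stmt_16 (p m s t : ℕ) [Fact p.Prime] (hm : m ≠ 0)
    (hmod : p ^ m % 3 = 1)
    (δt : Rt p m t) (hδ : IsUnit (δt ^ 3)) :
    IsUnit δt ∧
    ∃ b c : GaloisField p m, b ≠ c ∧ b ≠ 0 ∧ b ≠ 1 ∧ c ≠ 0 ∧ c ≠ 1 ∧
      (X : Polynomial (Rt p m t)) ^ (3 * p ^ s) - C (δt ^ 3) =
        (X ^ p ^ s - C δt) * (X ^ p ^ s - C (κ p m t b * δt)) *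
          (X ^ p ^ s - C (κ p m t c * δt)) ∧
      Nonempty (Qr p m t (3 * p ^ s) (δt ^ 3) ≃+*
        Qr p m t (p ^ s) δt ×
        Qr p m t (p ^ s) (κ p m t b * δt) ×
        Qr p m t (p ^ s) (κ p m t c * δt)) := by
  have hδt : IsUnit δt := (isUnit_pow_iff three_ne_zero).1 hδ
  obtain ⟨ω, hω⟩ := exists_isPrimitiveRoot_of_prime_dvd_card_sub_one (GaloisField p m) 3
    (by rw [GaloisField.card p m hm]; omega)
  have hω0 : ω ≠ 0 := hω.ne_zero three_ne_zero
  have hω1 : ω ≠ 1 := hω.ne_one (by norm_num)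
  have hω2 : ω ^ 2 ≠ 1 := hω.pow_ne_one_of_pos_of_lt two_ne_zero (by norm_num)
  have hωω2 : ω ≠ ω ^ 2 := fun h => by
    simpa using hω.pow_inj (i := 1) (j := 2) (by norm_num) (by norm_num) (by rwa [pow_one])
  have hsum : 1 + κ p m t ω + κ p m t ω ^ 2 = 0 := by
    have := hω.geom_sum_eq_zero (by norm_num)
    rw [Finset.sum_range_succ, Finset.sum_range_succ, Finset.sum_range_one, pow_zero,
      pow_one] at this
    rw [← map_pow, ← map_one (κ p m t), ← map_add, ← map_add, this, map_zero]
  have hfac := X_pow_three_mul_sub_C_pow_three hsum (p ^ s) δt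
  rw [← map_pow] at hfac
  have cop : ∀ x y, x ≠ y → IsCoprime ((X : (Rt p m t)[X]) ^ p ^ s - C (κ p m t x * δt))
      (X ^ p ^ s - C (κ p m t y * δt)) :=
    fun x y hxy => isCoprime_X_pow_sub_C_of_isUnit_sub _ (isUnit_map_mul_sub_map_mul _ hxy hδt)
  have cop1 : ∀ y, 1 ≠ y → IsCoprime ((X : (Rt p m t)[X]) ^ p ^ s - C δt)
      (X ^ p ^ s - C (κ p m t y * δt)) := by
    simpa only [map_one, one_mul] using cop 1
  refine ⟨hδt, ω, ω ^ 2, hωω2, hω0, hω1, pow_ne_zero 2 hω0, hω2, hfac, ⟨?_⟩⟩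
  -- without `R`, unifying the `CommSemiring` instance of `cop` with `CommRing.toCommSemiring` fails
  have e := Ideal.quotientSpanMulMulEquivProd (R := (Rt p m t)[X])
    (cop1 _ hω1.symm) (cop1 _ hω2.symm) (cop _ _ hωω2)
  rw [← hfac] at e
  exact e
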